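/- arXiv:math/0608394 — 3 statements merged into one kernel-verified Lean document; each statement's English description precedes it below -/
import Mathlib

section
/- Let A ∈ ℝ^{n×n} and b ∈ ℝ^n with (A, b) controllable. Write (sI − A)^{-1} b = n(s)/d(s) where d(s) = det(sI − A) and n(s) is the vector of polynomials with entries n_i(s) = Σ_{j=1}^{n} n_{ij} s^{j-1} (i.e., n(s) = adj(sI − A) b). Then the n×n matrix N = (n_{ij}) of polynomial coefficients is invertible. -/
open Polynomial Matrix

lemma isUnit_det_of_rank_eq_aux {n : ℕ} (M : Matrix (Fin n) (Fin n) ℝ) (h : M.rank = n) :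
    IsUnit M.det := by
  have hsurj : Function.Surjective M.mulVecLin := by
    rw [← LinearMap.range_eq_top]
    apply Submodule.eq_top_of_finrank_eq
    rw [Matrix.rank] at h
    simp [h]
  choose B hB using fun j => hsurj (Pi.single j 1)
  have hMB : M * (Matrix.of fun i j => B j i) = 1 := by
    ext i j
    have := congrFun (hB j) i
    simp only [Matrix.mulVecLin_apply] at this
    simp [Matrix.mul_apply, Matrix.mulVec, dotProduct, Matrix.one_apply] at this ⊢
    rw [this]
    simp [Pi.single_apply, eq_comm]
  exact Matrix.isUnit_det_of_right_inverse hMB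

/-- If `(A, b)` is controllable, and `n(s) = adj(sI − A) b` is the
vector of numerator polynomials of `(sI − A)⁻¹ b` (so `nᵢ(s) = Σⱼ nᵢⱼ s^(j-1)`),
then the matrix `N = (nᵢⱼ)` of polynomial coefficients is invertible. -/
theorem stmt3 (n : ℕ) (A : Matrix (Fin n) (Fin n) ℝ) (b : Fin n → ℝ)
    -- controllability: the matrix [b, Ab, …, A^{n-1} b] has full rank
    (hctrb : (Matrix.of fun (i j : Fin n) => ((A ^ (j : ℕ)) *ᵥ b) i).rank = n)
    (N : Matrix (Fin n) (Fin n) ℝ)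
    -- N i j is the coefficient of s^j (i.e. s^{(j+1)-1}) in the i-th entry of
    -- adj(s•I − A) b
    (hN : ∀ i j : Fin n, N i j =
      ((((X : ℝ[X]) • (1 : Matrix (Fin n) (Fin n) ℝ[X]) - A.map C).adjugate
          *ᵥ fun k => C (b k)) i).coeff (j : ℕ)) :
    IsUnit N.det := by
  classical
  set χ := A.charpoly with hχ
  have hχdeg : χ.natDegree = n := by
    rw [hχ, charpoly_natDegree_eq_dim, Fintype.card_fin]
  have hchar : ((X : ℝ[X]) • (1 : Matrix (Fin n) (Fin n) ℝ[X]) - A.map C) = charmatrix A := by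
    unfold charmatrix
    rw [smul_one_eq_diagonal]
    rfl
  set q := matPolyEquiv ((charmatrix A).adjugate) with hqdef
  have key : ((X : (Matrix (Fin n) (Fin n) ℝ)[X]) - C A) * q
      = χ.map (algebraMap ℝ (Matrix (Fin n) (Fin n) ℝ)) := by
    have h := congrArg matPolyEquiv (mul_adjugate (charmatrix A))
    rw [_root_.map_mul, matPolyEquiv_charmatrix, matPolyEquiv_smul_one] at h
    exact h
  have hrec : ∀ k, q.coeff k = A * q.coeff (k+1) + χ.coeff (k+1) • (1 : Matrix (Fin n) (Fin n) ℝ) := by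
    intro k
    have h := congrArg (fun p => p.coeff (k+1)) key
    simp only [sub_mul, coeff_sub, coeff_X_mul, coeff_C_mul, coeff_map,
      Algebra.algebraMap_eq_smul_one] at h
    have := sub_eq_iff_eq_add.mp h
    rw [this]; abel
  have hiter : ∀ j k, q.coeff k = A^j * q.coeff (k+j)
      + ∑ m ∈ Finset.range j, χ.coeff (k+1+m) • A^m := by
    intro j
    induction j with
    | zero => intro k; simp
    | succ j ih =>
      intro k
      rw [ih k, hrec (k+j), Finset.sum_range_succ, mul_add, ← mul_assoc, ← pow_succ,
        mul_smul_comm, mul_one]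
      have : k + 1 + j = k + j + 1 := by omega
      rw [this, add_assoc, add_comm (χ.coeff (k + j + 1) • A ^ j), show k + (j+1) = k + j + 1 by omega]
  have hcoeff : ∀ k, q.coeff k = ∑ m ∈ Finset.range n, χ.coeff (k+1+m) • A^m := by
    intro k
    set L := max n (q.natDegree + 1) with hL
    have h1 := hiter L k
    have h2 : q.coeff (k + L) = 0 := by
      apply coeff_eq_zero_of_natDegree_lt
      omega
    rw [h2, mul_zero, zero_add] at h1
    rw [h1]
    refine (Finset.sum_subset ?_ ?_).symm
    · exact Finset.range_subset_range.mpr (by omega)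
    · intro m hm hnm
      have hn : n ≤ m := by simpa using hnm
      have : χ.coeff (k+1+m) = 0 := by
        apply coeff_eq_zero_of_natDegree_lt
        omega
      simp [this]
  have hNeq : ∀ i j : Fin n, N i j
      = ∑ m ∈ Finset.range n, χ.coeff ((j:ℕ)+1+m) * ((A^m) *ᵥ b) i := by
    intro i j
    rw [hN i j, hchar]
    have h3 : (((charmatrix A).adjugate *ᵥ fun k => C (b k)) i).coeff (j:ℕ)
        = ((q.coeff (j:ℕ)) *ᵥ b) i := by
      simp only [Matrix.mulVec, dotProduct, Finset.sum_apply]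
      rw [finset_sum_coeff]
      refine Finset.sum_congr rfl fun l _ => ?_
      rw [coeff_mul_C, matPolyEquiv_coeff_apply]
    rw [h3, hcoeff (j:ℕ)]
    simp only [Matrix.mulVec, dotProduct, Matrix.sum_apply, Matrix.smul_apply, smul_eq_mul,
      Finset.sum_mul, Finset.mul_sum, mul_assoc]
    rw [Finset.sum_comm]
  set Ct : Matrix (Fin n) (Fin n) ℝ := Matrix.of fun (i j : Fin n) => ((A ^ (j : ℕ)) *ᵥ b) i with hCt
  set M' : Matrix (Fin n) (Fin n) ℝ := Matrix.of fun (m j : Fin n) => χ.coeff ((j:ℕ)+1+(m:ℕ)) with hM'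
  have hfact : N = Ct * M' := by
    ext i j
    rw [hNeq i j, Matrix.mul_apply]
    rw [Finset.sum_range fun m => χ.coeff ((j:ℕ)+1+m) * ((A^m) *ᵥ b) i]
    refine Finset.sum_congr rfl fun m _ => ?_
    simp [hCt, hM', mul_comm]
  have hM'det : IsUnit M'.det := by
    have htri : ((M'.submatrix (Fin.revPerm : Equiv.Perm (Fin n)) id)).BlockTriangular OrderDual.toDual := by
      intro i j hij
      simp only [OrderDual.toDual_lt_toDual] at hij
      have hi : (i:ℕ) < n := i.isLt
      have hj : (j:ℕ) < n := j.isLt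
      have : χ.coeff ((j:ℕ)+1+(n-((i:ℕ)+1))) = 0 := by
        apply coeff_eq_zero_of_natDegree_lt
        have : (j:ℕ) > (i:ℕ) := hij
        omega
      simpa [Matrix.submatrix_apply, hM', Fin.revPerm, Fin.rev] using this
    have hdet1 : (M'.submatrix (Fin.revPerm : Equiv.Perm (Fin n)) id).det = 1 := by
      rw [Matrix.det_of_lowerTriangular _ htri]
      apply Finset.prod_eq_one
      intro i _
      have : (i:ℕ)+1+(n-((i:ℕ)+1)) = n := by have := i.isLt; omega
      have hco : χ.coeff ((i:ℕ)+1+(n-((i:ℕ)+1))) = 1 := by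
        rw [this, ← hχdeg]
        exact A.charpoly_monic.coeff_natDegree
      simpa [Matrix.submatrix_apply, hM', Fin.revPerm, Fin.rev] using hco
    have := Matrix.det_permute (Fin.revPerm : Equiv.Perm (Fin n)) M'
    rw [hdet1] at this
    have hne : M'.det ≠ 0 := by
      intro h0
      rw [h0, mul_zero] at this
      exact one_ne_zero this
    exact isUnit_iff_ne_zero.mpr hne
  rw [hfact, Matrix.det_mul]
  exact (isUnit_det_of_rank_eq_aux Ct hctrb).mul hM'det
end

section
/- Let A ∈ ℝ^{n×n} be Hurwitz and b ∈ ℝ^n with (A, b) controllable. Then there exists c ∈ ℝ^n such that the transfer function c^⊤ (sI − A)^{-1} b has relative degree one (its numerator polynomial has degree exactly n−1) and is minimum phase (all zeros of the numerator polynomial have negative real part). -/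
open Polynomial Matrix

/-- The coefficient matrices of the polynomial expansion of `adjugate (charmatrix A)`
(Faddeev–LeVerrier / Horner form). -/
noncomputable def stmt4AuxM {n : ℕ} (A : Matrix (Fin n) (Fin n) ℝ) (k : ℕ) :
    Matrix (Fin n) (Fin n) ℝ :=
  ∑ m ∈ Finset.range n, A.charpoly.coeff (k + 1 + m) • A ^ m

lemma stmt4_coeff_hi {n : ℕ} (A : Matrix (Fin n) (Fin n) ℝ) {j : ℕ} (h : n < j) :
    A.charpoly.coeff j = 0 := by
  apply Polynomial.coeff_eq_zero_of_natDegree_lt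
  rwa [A.charpoly_natDegree_eq_dim, Fintype.card_fin]

lemma stmt4_auxM_rec {n : ℕ} (A : Matrix (Fin n) (Fin n) ℝ) (k : ℕ) :
    stmt4AuxM A k = A.charpoly.coeff (k + 1) • 1 + A * stmt4AuxM A (k + 1) := by
  have h1 : ∑ m ∈ Finset.range (n + 1), A.charpoly.coeff (k + 1 + m) • A ^ m
      = stmt4AuxM A k := by
    rw [Finset.sum_range_succ, stmt4_coeff_hi A (by omega), zero_smul, add_zero, stmt4AuxM]
  have h2 : ∑ m ∈ Finset.range (n + 1), A.charpoly.coeff (k + 1 + m) • A ^ m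
      = A.charpoly.coeff (k + 1) • 1 + A * stmt4AuxM A (k + 1) := by
    have h3 : ∀ m : ℕ, A * (A.charpoly.coeff (k + 1 + 1 + m) • A ^ m)
        = A.charpoly.coeff (k + 1 + (m + 1)) • A ^ (m + 1) := by
      intro m
      rw [mul_smul_comm, ← pow_succ']
      congr 2
      omega
    rw [Finset.sum_range_succ', stmt4AuxM, Finset.mul_sum]
    simp only [h3]
    rw [add_comm]
    simp
  rw [← h1, h2]

lemma stmt4_auxM_comm {n : ℕ} (A : Matrix (Fin n) (Fin n) ℝ) (k : ℕ) :
    stmt4AuxM A k * A = A * stmt4AuxM A k := by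
  rw [stmt4AuxM, Finset.sum_mul, Finset.mul_sum]
  apply Finset.sum_congr rfl
  intro m _
  rw [smul_mul_assoc, mul_smul_comm, ← pow_succ, ← pow_succ']

lemma stmt4_auxM_zero {n : ℕ} (A : Matrix (Fin n) (Fin n) ℝ) :
    A * stmt4AuxM A 0 = -(A.charpoly.coeff 0 • 1) := by
  have hCH := A.aeval_self_charpoly
  rw [Polynomial.aeval_eq_sum_range, A.charpoly_natDegree_eq_dim, Fintype.card_fin] at hCH
  rw [Finset.sum_range_succ'] at hCH
  have : ∑ i ∈ Finset.range n, A.charpoly.coeff (i + 1) • A ^ (i + 1)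
      = A * stmt4AuxM A 0 := by
    rw [stmt4AuxM, Finset.mul_sum]
    apply Finset.sum_congr rfl
    intro m _
    rw [mul_smul_comm, ← pow_succ']
    congr 2
    omega
  rw [this] at hCH
  simp only [pow_zero] at hCH
  linear_combination (norm := abel) hCH

lemma stmt4_auxM_top {m : ℕ} (A : Matrix (Fin (m + 1)) (Fin (m + 1)) ℝ) :
    stmt4AuxM A m = 1 := by
  rw [stmt4AuxM, Finset.sum_eq_single 0]
  · have h := (A.charpoly_monic).coeff_natDegree
    rw [A.charpoly_natDegree_eq_dim, Fintype.card_fin] at h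
    simp only [add_zero, pow_zero]
    rw [h, one_smul]
  · intro k _ hk
    rw [stmt4_coeff_hi A (by omega), zero_smul]
  · intro h
    simp at h

lemma stmt4_coeff_top {m : ℕ} (A : Matrix (Fin (m + 1)) (Fin (m + 1)) ℝ) :
    A.charpoly.coeff (m + 1) = 1 := by
  have h := (A.charpoly_monic).coeff_natDegree
  rwa [A.charpoly_natDegree_eq_dim, Fintype.card_fin] at h

/-- The key telescoping identity, on the `matPolyEquiv` side. -/
lemma stmt4_q_mul {m : ℕ} (A : Matrix (Fin (m + 1)) (Fin (m + 1)) ℝ) :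
    (∑ k ∈ Finset.range (m + 1),
        (C (stmt4AuxM A k) * X ^ k : (Matrix (Fin (m + 1)) (Fin (m + 1)) ℝ)[X])) * (X - C A)
      = A.charpoly.map (algebraMap ℝ (Matrix (Fin (m + 1)) (Fin (m + 1)) ℝ)) := by
  have key : ∀ k, (C (stmt4AuxM A k) * X ^ k :
        (Matrix (Fin (m + 1)) (Fin (m + 1)) ℝ)[X]) * (X - C A)
      = C (stmt4AuxM A k) * X ^ (k + 1) - C (stmt4AuxM A k * A) * X ^ k := by
    intro k
    rw [mul_sub, mul_assoc, ← pow_succ, mul_assoc, X_pow_mul, ← mul_assoc, ← C_mul]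
  rw [Finset.sum_mul]
  simp only [key]
  rw [Finset.sum_sub_distrib]
  rw [Finset.sum_range_succ (fun k => (C (stmt4AuxM A k) * X ^ (k + 1))), stmt4_auxM_top,
    Polynomial.C_1, one_mul]
  rw [Finset.sum_range_succ' (fun k => (C (stmt4AuxM A k * A) * X ^ k))]
  simp only [stmt4_auxM_comm, pow_zero, mul_one, stmt4_auxM_zero]
  have hrw : ∀ k, A * stmt4AuxM A (k + 1)
      = stmt4AuxM A k - A.charpoly.coeff (k + 1) • 1 := by
    intro k; rw [stmt4_auxM_rec A k]; abel
  simp only [hrw]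
  have expand : A.charpoly.map (algebraMap ℝ (Matrix (Fin (m + 1)) (Fin (m + 1)) ℝ))
      = ∑ i ∈ Finset.range (m + 2),
        C (A.charpoly.coeff i • (1 : Matrix (Fin (m + 1)) (Fin (m + 1)) ℝ)) * X ^ i := by
    conv_lhs => rw [A.charpoly.as_sum_range' (m + 2)
      (by rw [A.charpoly_natDegree_eq_dim, Fintype.card_fin]; omega)]
    rw [Polynomial.map_sum]
    apply Finset.sum_congr rfl
    intro i _
    rw [← C_mul_X_pow_eq_monomial, Polynomial.map_mul, Polynomial.map_pow, map_X, map_C]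
    congr 1
    rw [Algebra.algebraMap_eq_smul_one]
  rw [expand, Finset.sum_range_succ, Finset.sum_range_succ']
  rw [stmt4_coeff_top, one_smul, Polynomial.C_1, one_mul]
  simp only [_root_.map_sub, _root_.map_neg, sub_mul, pow_zero, mul_one,
    Finset.sum_sub_distrib]
  abel

/-- The adjugate of the characteristic matrix in Horner form. -/
lemma stmt4_adjugate_eq {m : ℕ} (A : Matrix (Fin (m + 1)) (Fin (m + 1)) ℝ) :
    (charmatrix A).adjugate
      = ∑ k ∈ Finset.range (m + 1), (X : ℝ[X]) ^ k • (stmt4AuxM A k).map C := by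
  set N : Matrix (Fin (m + 1)) (Fin (m + 1)) ℝ[X] :=
    ∑ k ∈ Finset.range (m + 1), (X : ℝ[X]) ^ k • (stmt4AuxM A k).map C with hN
  have hNq : matPolyEquiv N = ∑ k ∈ Finset.range (m + 1),
      (C (stmt4AuxM A k) * X ^ k : (Matrix (Fin (m + 1)) (Fin (m + 1)) ℝ)[X]) := by
    rw [hN, map_sum]
    apply Finset.sum_congr rfl
    intro k _
    rw [matPolyEquiv_map_smul, matPolyEquiv_map_C, Polynomial.map_pow, map_X, X_pow_mul]
  have h1 : N * charmatrix A = A.charpoly • 1 := by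
    apply matPolyEquiv.injective
    rw [_root_.map_mul, matPolyEquiv_charmatrix, hNq, stmt4_q_mul, matPolyEquiv_smul_one]
  have h2 : (charmatrix A).adjugate * charmatrix A = A.charpoly • 1 := by
    rw [Matrix.adjugate_mul, Matrix.charpoly]
  have h3 : (N - (charmatrix A).adjugate) * charmatrix A = 0 := by
    rw [sub_mul, h1, h2, sub_self]
  have h4 : A.charpoly • (N - (charmatrix A).adjugate) = 0 := by
    have := congrArg (· * (charmatrix A).adjugate) h3
    simp only [zero_mul, mul_assoc, Matrix.mul_adjugate] at this
    rw [Matrix.mul_smul, mul_one] at this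
    rwa [Matrix.charpoly]
  have h5 : N - (charmatrix A).adjugate = 0 := by
    apply Matrix.ext
    intro i j
    have := congrFun (congrFun h4 i) j
    simp only [Matrix.smul_apply, Matrix.zero_apply, smul_eq_mul] at this
    rcases mul_eq_zero.mp this with h | h
    · exact absurd h (A.charpoly_monic).ne_zero
    · simpa using h
  have := sub_eq_zero.mp h5
  rw [this]

lemma stmt4_isUnit_of_rank {n : ℕ} (K : Matrix (Fin n) (Fin n) ℝ) (h : K.rank = n) :
    IsUnit K.det := by
  rw [← Matrix.isUnit_iff_isUnit_det, ← Matrix.mulVec_surjective_iff_isUnit]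
  rw [Matrix.rank] at h
  have htop : LinearMap.range K.mulVecLin = ⊤ := by
    apply Submodule.eq_top_of_finrank_eq
    rw [h, Module.finrank_fintype_fun_eq_card, Fintype.card_fin]
  intro v
  obtain ⟨c, hc⟩ := htop ▸ Submodule.mem_top (x := v) (R := ℝ)
  exact ⟨c, hc⟩

lemma stmt4_detL_ne_zero {m : ℕ} (A : Matrix (Fin (m + 1)) (Fin (m + 1)) ℝ) :
    (Matrix.of fun (k j : Fin (m + 1)) =>
      A.charpoly.coeff ((k : ℕ) + 1 + (j : ℕ))).det ≠ 0 := by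
  set L := Matrix.of fun (k j : Fin (m + 1)) =>
    A.charpoly.coeff ((k : ℕ) + 1 + (j : ℕ)) with hL
  have htri : (L.submatrix id ⇑(Fin.revPerm)).BlockTriangular id := by
    intro i j hij
    simp only [Matrix.submatrix_apply, id_eq, hL, Matrix.of_apply, Fin.revPerm_apply]
    apply stmt4_coeff_hi
    have hj := Fin.val_rev j
    have : (j : ℕ) ≤ m := Nat.lt_succ_iff.mp j.isLt
    simp only [id_eq] at hij
    omega
  have hdet1 : (L.submatrix id ⇑(Fin.revPerm)).det = 1 := by
    rw [Matrix.det_of_upperTriangular htri]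
    apply Finset.prod_eq_one
    intro i _
    simp only [Matrix.submatrix_apply, id_eq, hL, Matrix.of_apply, Fin.revPerm_apply]
    have hj := Fin.val_rev i
    have : (i : ℕ) ≤ m := Nat.lt_succ_iff.mp i.isLt
    have h2 : (i : ℕ) + 1 + ((Fin.rev i : Fin (m + 1)) : ℕ) = m + 1 := by omega
    rw [h2, stmt4_coeff_top]
  have hperm := Matrix.det_permute' Fin.revPerm L
  rw [hdet1] at hperm
  intro h
  rw [h, mul_zero] at hperm
  exact one_ne_zero hperm

/-- If `A` is Hurwitz and `(A, b)` is controllable, then there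
exists `c ∈ ℝⁿ` such that `c^⊤ (sI − A)⁻¹ b = p(s)/det(sI − A)` has relative
degree one (the numerator `p(s) = c^⊤ adj(sI − A) b` has degree exactly
`n − 1`) and is minimum phase (all complex roots of `p` have negative real
part). -/
theorem stmt4 (n : ℕ) (hn : 0 < n) (A : Matrix (Fin n) (Fin n) ℝ) (b : Fin n → ℝ)
    -- Hurwitz: every eigenvalue (root of the characteristic polynomial over ℂ)
    -- has negative real part
    (hHur : ∀ z : ℂ, (A.charpoly.map (algebraMap ℝ ℂ)).IsRoot z → z.re < 0)
    -- controllability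
    (hctrb : (Matrix.of fun (i j : Fin n) => ((A ^ (j : ℕ)) *ᵥ b) i).rank = n) :
    ∃ c : Fin n → ℝ,
      (∑ i : Fin n, C (c i) *
          ((((X : ℝ[X]) • (1 : Matrix (Fin n) (Fin n) ℝ[X]) - A.map C).adjugate
            *ᵥ fun k => C (b k)) i)).natDegree = n - 1 ∧
      ∀ z : ℂ,
        ((∑ i : Fin n, C (c i) *
            ((((X : ℝ[X]) • (1 : Matrix (Fin n) (Fin n) ℝ[X]) - A.map C).adjugate
              *ᵥ fun k => C (b k)) i)).map (algebraMap ℝ ℂ)).IsRoot z → z.re < 0 := by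
  obtain ⟨m, rfl⟩ : ∃ m, n = m + 1 := ⟨n - 1, (Nat.succ_pred_eq_of_pos hn).symm⟩
  -- the matrix in the statement is the characteristic matrix
  have hcm : (X : ℝ[X]) • (1 : Matrix (Fin (m + 1)) (Fin (m + 1)) ℝ[X]) - A.map C
      = charmatrix A := by
    apply Matrix.ext
    intro i j
    by_cases h : i = j <;>
      simp [charmatrix_apply, h, Matrix.one_apply, Matrix.diagonal_apply]
  -- the coefficient-extraction matrices
  set K : Matrix (Fin (m + 1)) (Fin (m + 1)) ℝ :=
    Matrix.of fun (i j : Fin (m + 1)) => ((A ^ (j : ℕ)) *ᵥ b) i with hK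
  set L : Matrix (Fin (m + 1)) (Fin (m + 1)) ℝ :=
    Matrix.of fun (k j : Fin (m + 1)) =>
      A.charpoly.coeff ((k : ℕ) + 1 + (j : ℕ)) with hLdef
  set T : Matrix (Fin (m + 1)) (Fin (m + 1)) ℝ :=
    Matrix.of fun (k i : Fin (m + 1)) => (stmt4AuxM A (k : ℕ) *ᵥ b) i with hTdef
  have hav : ∀ (k : ℕ) (i : Fin (m + 1)), (stmt4AuxM A k *ᵥ b) i
      = ∑ j ∈ Finset.range (m + 1), A.charpoly.coeff (k + 1 + j) * ((A ^ j *ᵥ b) i) := by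
    intro k i
    simp only [stmt4AuxM, Matrix.mulVec, dotProduct, Matrix.sum_apply,
      Matrix.smul_apply, smul_eq_mul, Finset.sum_mul, Finset.mul_sum]
    rw [Finset.sum_comm]
    exact Finset.sum_congr rfl fun j _ => Finset.sum_congr rfl fun x _ => by ring
  have hT : T = L * Kᵀ := by
    apply Matrix.ext
    intro k i
    rw [Matrix.mul_apply]
    simp only [hTdef, hLdef, hK, Matrix.of_apply, Matrix.transpose_apply]
    rw [hav, ← Fin.sum_univ_eq_sum_range
      (fun j => A.charpoly.coeff ((k : ℕ) + 1 + j) * ((A ^ j *ᵥ b) i))]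
  have hTdet : IsUnit T.det := by
    rw [hT, Matrix.det_mul, Matrix.det_transpose]
    exact (isUnit_iff_ne_zero.mpr (stmt4_detL_ne_zero A)).mul
      (stmt4_isUnit_of_rank K hctrb)
  -- the target numerator polynomial
  set q : ℝ[X] := (X + 1) ^ m with hq
  have hqdeg : q.natDegree = m := by
    rw [hq, natDegree_pow]
    have : (X + 1 : ℝ[X]) = X + C 1 := by rw [Polynomial.C_1]
    rw [this, natDegree_X_add_C, mul_one]
  set c : Fin (m + 1) → ℝ := T⁻¹ *ᵥ fun k : Fin (m + 1) => q.coeff (k : ℕ) with hc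
  have hTc : T *ᵥ c = fun k : Fin (m + 1) => q.coeff (k : ℕ) := by
    rw [hc, Matrix.mulVec_mulVec, Matrix.mul_nonsing_inv T hTdet, Matrix.one_mulVec]
  refine ⟨c, ?_⟩
  -- the numerator equals q
  have hmain : (∑ i : Fin (m + 1), C (c i) *
      ((((X : ℝ[X]) • (1 : Matrix (Fin (m + 1)) (Fin (m + 1)) ℝ[X]) - A.map C).adjugate
        *ᵥ fun k => C (b k)) i)) = q := by
    rw [hcm, stmt4_adjugate_eq]
    have hentry : ∀ i : Fin (m + 1),
        (((∑ k ∈ Finset.range (m + 1), (X : ℝ[X]) ^ k • (stmt4AuxM A k).map C)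
          *ᵥ fun j => C (b j)) i)
        = ∑ k ∈ Finset.range (m + 1), X ^ k * C ((stmt4AuxM A k *ᵥ b) i) := by
      intro i
      simp only [Matrix.mulVec, dotProduct, Matrix.sum_apply, Matrix.smul_apply,
        Matrix.map_apply, smul_eq_mul, Finset.sum_mul]
      rw [Finset.sum_comm]
      apply Finset.sum_congr rfl
      intro k _
      conv_rhs => rw [map_sum, Finset.mul_sum]
      exact Finset.sum_congr rfl fun x _ => by rw [C_mul]; ring
    simp only [hentry]
    have hswap : ∑ i : Fin (m + 1), C (c i) *
        ∑ k ∈ Finset.range (m + 1), X ^ k * C ((stmt4AuxM A k *ᵥ b) i)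
        = ∑ k ∈ Finset.range (m + 1),
            X ^ k * C (∑ i : Fin (m + 1), (stmt4AuxM A k *ᵥ b) i * c i) := by
      simp only [Finset.mul_sum]
      rw [Finset.sum_comm]
      apply Finset.sum_congr rfl
      intro k _
      conv_rhs => rw [map_sum, Finset.mul_sum]
      exact Finset.sum_congr rfl fun i _ => by rw [C_mul]; ring
    rw [hswap]
    have hcoeff : ∀ k : Fin (m + 1),
        ∑ i : Fin (m + 1), (stmt4AuxM A (k : ℕ) *ᵥ b) i * c i = q.coeff (k : ℕ) := by
      intro k
      have := congrFun hTc k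
      simp only [Matrix.mulVec, dotProduct, hTdef, Matrix.of_apply] at this
      exact this
    rw [← Fin.sum_univ_eq_sum_range
      (fun k => (X : ℝ[X]) ^ k * C (∑ i : Fin (m + 1), (stmt4AuxM A k *ᵥ b) i * c i))]
    conv_rhs => rw [q.as_sum_range' (m + 1) (by omega)]
    rw [← Fin.sum_univ_eq_sum_range (fun k => (monomial k) (q.coeff k))]
    apply Finset.sum_congr rfl
    intro k _
    rw [hcoeff k, ← C_mul_X_pow_eq_monomial]
    ring
  rw [hmain]
  constructor
  · rw [hqdeg]
    omega
  · intro z hz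
    rw [hq] at hz
    simp only [IsRoot, Polynomial.map_pow, Polynomial.map_add, map_X, Polynomial.map_one,
      eval_pow, eval_add, eval_X, eval_one] at hz
    by_cases hm : m = 0
    · rw [hm, pow_zero] at hz
      exact absurd hz one_ne_zero
    · have : z + 1 = 0 := pow_eq_zero_iff hm |>.mp hz
      have hz1 : z = -1 := by linear_combination this
      rw [hz1]
      norm_num
end

section
/- For the reference system ẋ_ref = A_m x_ref + b(ω u_ref + θ^⊤ x_ref + σ), with u_ref(s) = C(s)(−θ^⊤ x_ref(s) − σ(s) + k_g r(s))/ω, the state satisfies x_ref(s) = G(s)(θ^⊤ x_ref(s) + σ(s)) + H(s)C(s)k_g r(s), where H(s) = (sI − A_m)^{-1}b and G(s) = H(s)(1 − C(s)). Consequently, if ‖G(s)‖_{L1} · L < 1 where L ≥ Σᵢ|θᵢ|, and r, σ are bounded, then x_ref is bounded with ‖x_ref‖_{L∞} ≤ (‖G‖_{L1}‖σ‖_{L∞} + ‖H C k_g‖_{L1}‖r‖_{L∞})/(1 − ‖G‖_{L1} L). -/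
/-!
Small gain on truncated norms: on `[0, t]` the continuous state attains the maximum `K` of its
sup-norm at some `t'`. Evaluating the convolution representation at `t'`, Young-type bounds give
`K ≤ gG (L K + Mσ) + gW Mr`, and `gG L < 1` lets one solve for `K`.
-/

open MeasureTheory Matrix

lemma abs_intervalIntegral_conv_le (h f : ℝ → ℝ) {t G C : ℝ} (ht : 0 ≤ t) (hC : 0 ≤ C)
    (hh : IntegrableOn h (Set.Ici 0)) (hG : ∫ u in Set.Ici (0:ℝ), |h u| ≤ G)
    (hf : ∀ s ∈ Set.Ioc 0 t, |f s| ≤ C) :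
    |∫ s in (0:ℝ)..t, h (t - s) * f s| ≤ G * C := by
  have habs : IntegrableOn (fun u => |h u|) (Set.Ici 0) := hh.abs
  have habs_interval : IntervalIntegrable (fun u => |h u|) volume 0 t :=
    (habs.mono_set (by rw [Set.uIcc_of_le ht]; exact Set.Icc_subset_Ici_self)).intervalIntegrable
  have hmajorant : IntervalIntegrable (fun s => |h (t - s)| * C) volume 0 t := by
    simpa using (habs_interval.comp_sub_left t).symm.mul_const C
  have hreflect : ∫ s in (0:ℝ)..t, |h (t - s)| = ∫ u in (0:ℝ)..t, |h u| := by
    simpa using intervalIntegral.integral_comp_sub_left (f := fun u => |h u|) (a := 0) (b := t) t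
  have hnonneg : 0 ≤ ∫ u in (0:ℝ)..t, |h u| :=
    intervalIntegral.integral_nonneg ht fun u _ => abs_nonneg _
  have htruncate : ∫ u in (0:ℝ)..t, |h u| ≤ G := by
    rw [intervalIntegral.integral_of_le ht]
    refine le_trans (setIntegral_mono_set habs ?_ ?_) hG
    · exact Filter.Eventually.of_forall fun u => abs_nonneg _
    · exact (Set.Ioc_subset_Icc_self.trans Set.Icc_subset_Ici_self).eventuallyLE
  calc |∫ s in (0:ℝ)..t, h (t - s) * f s|
      ≤ |∫ s in (0:ℝ)..t, |h (t - s)| * C| := by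
        rw [← Real.norm_eq_abs]
        refine intervalIntegral.norm_integral_le_abs_of_norm_le ?_ hmajorant
        refine (ae_restrict_iff' measurableSet_uIoc).mpr (Filter.Eventually.of_forall ?_)
        intro s hs
        rw [Set.uIoc_of_le ht] at hs
        rw [Real.norm_eq_abs, abs_mul]
        exact mul_le_mul_of_nonneg_left (hf s hs) (abs_nonneg _)
    _ = (∫ u in (0:ℝ)..t, |h u|) * C := by
        rw [intervalIntegral.integral_mul_const, hreflect, abs_of_nonneg (mul_nonneg hnonneg hC)]
    _ ≤ G * C := mul_le_mul_of_nonneg_right htruncate hC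

lemma abs_dotProduct_le_sum_abs_mul_norm {ι : Type*} [Fintype ι] (θ x : ι → ℝ) :
    |θ ⬝ᵥ x| ≤ (∑ i, |θ i|) * ‖x‖ :=
  calc |θ ⬝ᵥ x| ≤ ∑ i, |θ i * x i| := Finset.abs_sum_le_sum_abs _ _
    _ ≤ ∑ i, |θ i| * ‖x‖ := Finset.sum_le_sum fun i _ => by
        rw [abs_mul]
        exact mul_le_mul_of_nonneg_left (norm_le_pi_norm x i) (abs_nonneg _)
    _ = (∑ i, |θ i|) * ‖x‖ := (Finset.sum_mul _ _ _).symm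

lemma le_div_one_sub_mul_of_le_mul_add {K a L b c : ℝ} (hsmall : a * L < 1)
    (hK : K ≤ a * (L * K + b) + c) : K ≤ (a * b + c) / (1 - a * L) := by
  rw [le_div_iff₀ (by linarith)]
  linarith

theorem stmt13_general (n : ℕ)
    (g w : ℝ → Fin n → ℝ)           -- impulse responses of G(s) and H(s)C(s)k_g
    (θ : Fin n → ℝ) (L : ℝ) (hθL : (∑ i : Fin n, |θ i|) ≤ L)
    (gG gW : ℝ)                      -- L1 gains of G(s) and H(s)C(s)k_g
    (hgG : ∀ i : Fin n, (∫ t in Set.Ici (0:ℝ), |g t i|) ≤ gG)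
    (hgW : ∀ i : Fin n, (∫ t in Set.Ici (0:ℝ), |w t i|) ≤ gW)
    (hgint : ∀ i : Fin n, IntegrableOn (fun t => g t i) (Set.Ici (0:ℝ)))
    (hwint : ∀ i : Fin n, IntegrableOn (fun t => w t i) (Set.Ici (0:ℝ)))
    (hsmall : gG * L < 1)            -- the L1 stability requirement ‖G‖_{L1} L < 1
    (σ r : ℝ → ℝ)
    (Mσ Mr : ℝ) (hMσ : ∀ t : ℝ, 0 ≤ t → |σ t| ≤ Mσ)
    (hMr : ∀ t : ℝ, 0 ≤ t → |r t| ≤ Mr)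
    (xref : ℝ → Fin n → ℝ) (hxc : Continuous xref)
    (hx : ∀ t : ℝ, 0 ≤ t → ∀ i : Fin n,
      xref t i = (∫ s in (0:ℝ)..t, g (t - s) i * (θ ⬝ᵥ xref s + σ s)) +
        ∫ s in (0:ℝ)..t, w (t - s) i * r s) :
    ∀ t : ℝ, 0 ≤ t → ∀ i : Fin n,
      |xref t i| ≤ (gG * Mσ + gW * Mr) / (1 - gG * L) := by
  intro t ht i
  have : Nonempty (Fin n) := ⟨i⟩
  have hMσ0 : 0 ≤ Mσ := (abs_nonneg _).trans (hMσ 0 le_rfl)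
  have hMr0 : 0 ≤ Mr := (abs_nonneg _).trans (hMr 0 le_rfl)
  have hL0 : 0 ≤ L := (Finset.sum_nonneg fun j _ => abs_nonneg _).trans hθL
  obtain ⟨t', ht', hmax⟩ := isCompact_Icc.exists_isMaxOn
    (Set.nonempty_Icc.mpr ht) hxc.norm.continuousOn
  set K := ‖xref t'‖
  have hforcing : ∀ s ∈ Set.Ioc 0 t', |θ ⬝ᵥ xref s + σ s| ≤ L * K + Mσ := fun s hs =>
    (abs_add_le _ _).trans <| add_le_add
      ((abs_dotProduct_le_sum_abs_mul_norm θ (xref s)).trans <| mul_le_mul hθL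
        (hmax ⟨hs.1.le, hs.2.trans ht'.2⟩) (norm_nonneg _) hL0)
      (hMσ s hs.1.le)
  have hgain : K ≤ gG * (L * K + Mσ) + gW * Mr := (pi_norm_le_iff_of_nonempty _).mpr fun j => by
    rw [Real.norm_eq_abs, hx t' ht'.1 j]
    exact (abs_add_le _ _).trans <| add_le_add
      (abs_intervalIntegral_conv_le (g · j) _ ht'.1 (by positivity) (hgint j) (hgG j) hforcing)
      (abs_intervalIntegral_conv_le (w · j) r ht'.1 hMr0 (hwint j) (hgW j)
        fun s hs => hMr s hs.1.le)
  calc |xref t i| ≤ ‖xref t‖ := norm_le_pi_norm (xref t) i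
    _ ≤ K := hmax ⟨ht, le_rfl⟩
    _ ≤ (gG * Mσ + gW * Mr) / (1 - gG * L) := le_div_one_sub_mul_of_le_mul_add hsmall hgain

/-- For the closed-loop reference system, the state satisfies
`x_ref(s) = G(s)(θᵀ x_ref(s) + σ(s)) + H(s)C(s)k_g r(s)` with
`G(s) = H(s)(1 − C(s))`; in the time domain (zero initial condition) this
reads, componentwise,
`x_ref(t)ᵢ = ∫₀ᵗ g(t−s)ᵢ (θᵀx_ref(s) + σ(s)) ds + ∫₀ᵗ w(t−s)ᵢ r(s) ds`,
where `g` is the impulse response of `G(s)` and `w` that of `H(s)C(s)k_g`.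
If the L1-gain condition `‖G‖_{L1} L < 1` holds with `Σᵢ|θᵢ| ≤ L`, and `r`,
`σ` are bounded, then `x_ref` is bounded with
`‖x_ref‖_{L∞} ≤ (‖G‖_{L1}‖σ‖_{L∞} + ‖HCk_g‖_{L1}‖r‖_{L∞})/(1 − ‖G‖_{L1}L)`. -/
theorem stmt13 (n : ℕ)
    (g w : ℝ → Fin n → ℝ)           -- impulse responses of G(s) and H(s)C(s)k_g
    (θ : Fin n → ℝ) (L : ℝ) (hθL : (∑ i : Fin n, |θ i|) ≤ L)
    (gG gW : ℝ)                      -- L1 gains of G(s) and H(s)C(s)k_g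
    (hgG : ∀ i : Fin n, (∫ t in Set.Ici (0:ℝ), |g t i|) ≤ gG)
    (hgW : ∀ i : Fin n, (∫ t in Set.Ici (0:ℝ), |w t i|) ≤ gW)
    (hgint : ∀ i : Fin n, IntegrableOn (fun t => g t i) (Set.Ici (0:ℝ)))
    (hwint : ∀ i : Fin n, IntegrableOn (fun t => w t i) (Set.Ici (0:ℝ)))
    (hsmall : gG * L < 1)            -- the L1 stability requirement ‖G‖_{L1} L < 1
    (σ r : ℝ → ℝ) (hσm : Measurable σ) (hrm : Measurable r)
    (Mσ Mr : ℝ) (hMσ : ∀ t : ℝ, 0 ≤ t → |σ t| ≤ Mσ)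
    (hMr : ∀ t : ℝ, 0 ≤ t → |r t| ≤ Mr)
    (xref : ℝ → Fin n → ℝ) (hxc : Continuous xref) (hx0 : xref 0 = 0)
    (hx : ∀ t : ℝ, 0 ≤ t → ∀ i : Fin n,
      xref t i = (∫ s in (0:ℝ)..t, g (t - s) i * (θ ⬝ᵥ xref s + σ s)) +
        ∫ s in (0:ℝ)..t, w (t - s) i * r s) :
    ∀ t : ℝ, 0 ≤ t → ∀ i : Fin n,
      |xref t i| ≤ (gG * Mσ + gW * Mr) / (1 - gG * L) :=
  stmt13_general n g w θ L hθL gG gW hgG hgW hgint hwint hsmall σ r Mσ Mr hMσ hMr xref hxc hx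
end
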